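/- arXiv:2007.04128 — 7 statements merged into one kernel-verified Lean document; each statement's English description precedes it below -/
import Mathlib

section
/- Let S be a string and let P, Q, R be patterns with P a prefix of Q and Q a prefix of R. If (i, j) is a consecutive occurrence of P in S and also a consecutive occurrence of R in S, then (i, j) is a consecutive occurrence of Q in S. (Hence, along any chain of patterns each a prefix of the next, the set of indices d for which a fixed pair (i, j) is a consecutive occurrence of the d-th pattern is an interval of consecutive integers.) -/
variable {α : Type*}

/-- `i` is an occurrence of pattern `P` in string `S`. -/
def IsOcc (S P : List α) (i : ℕ) : Prop :=
  i + P.length ≤ S.length ∧ ∀ t < P.length, S[i + t]? = P[t]?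

/-- The set of occurrences of `P` in `S`. -/
def OccSet (S P : List α) : Set ℕ := {i | IsOcc S P i}

/-- `(i, j)` is a consecutive occurrence of `P` in `S`. -/
def IsConsec (S P : List α) (i j : ℕ) : Prop :=
  i < j ∧ IsOcc S P i ∧ IsOcc S P j ∧ ∀ k, i < k → k < j → ¬ IsOcc S P k

/-- The set of consecutive occurrences of `P` in `S`. -/
def DSet (S P : List α) : Set (ℕ × ℕ) := {p | IsConsec S P p.1 p.2}

theorem IsOcc.of_isPrefix {S P Q : List α} {i : ℕ} (hPQ : P <+: Q) (h : IsOcc S Q i) :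
    IsOcc S P i := by
  have hlen := hPQ.length_le
  refine ⟨(Nat.add_le_add_left hlen i).trans h.1, fun t ht => ?_⟩
  rw [h.2 t (ht.trans_le hlen), List.getElem?_eq_getElem ht,
    List.getElem?_eq_getElem (ht.trans_le hlen), hPQ.getElem ht]

/-- If `P` is a prefix of `Q` and `Q` of `R`, and `(i,j)` is a consecutive occurrence of both
`P` and `R`, then it is also a consecutive occurrence of `Q`. -/
theorem stmt_2 (S P Q R : List α) (hPQ : P <+: Q) (hQR : Q <+: R) (i j : ℕ)
    (hP : IsConsec S P i j) (hR : IsConsec S R i j) :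
    IsConsec S Q i j := by
  obtain ⟨hij, -, -, hPgap⟩ := hP
  obtain ⟨-, hRi, hRj, -⟩ := hR
  exact ⟨hij, hRi.of_isPrefix hQR, hRj.of_isPrefix hQR,
    fun k hik hkj hQk => hPgap k hik hkj (hQk.of_isPrefix hPQ)⟩
end

section
/- Let S be a string and let P, P' be patterns with P a prefix of P'. Suppose (i, j) is a consecutive occurrence of P' in S but not a consecutive occurrence of P in S. Then there exists k with i < k < j such that k is an occurrence of P but not of P'; moreover, letting k₀ be the smallest occurrence of P in S with k₀ > i, the pair (i, k₀) is a consecutive occurrence of P in S, satisfies k₀ − i < j − i, and is not a consecutive occurrence of P' in S (indeed k₀ is not an occurrence of P'). In particular, for every consecutive occurrence of P' that is not a consecutive occurrence of P there is a consecutive occurrence of P of strictly smaller distance that is not a consecutive occurrence of P'. -/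
variable {α : Type*}

lemma occ_of_prefix {S P P' : List α} (hpre : P <+: P') {m : ℕ}
    (h : IsOcc S P' m) : IsOcc S P m := by
  obtain ⟨Q, rfl⟩ := hpre
  have h1 := h.1
  simp only [List.length_append] at h1
  refine ⟨by omega, fun t ht => ?_⟩
  rw [h.2 t (by simp only [List.length_append]; omega), List.getElem?_append, if_pos ht]

/-- If `(i,j)` is a consecutive occurrence of `P'` but not of its prefix `P`, then some
`k` strictly between `i` and `j` is an occurrence of `P` but not of `P'`; moreover for the
smallest occurrence `k₀` of `P` exceeding `i`, the pair `(i,k₀)` is a consecutive occurrence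
of `P` of strictly smaller distance, `k₀` is not an occurrence of `P'`, and `(i,k₀)` is not
a consecutive occurrence of `P'`. -/
theorem stmt_3 (S P P' : List α) (hpre : P <+: P') (i j : ℕ)
    (h' : IsConsec S P' i j) (hnot : ¬ IsConsec S P i j) :
    (∃ k, i < k ∧ k < j ∧ IsOcc S P k ∧ ¬ IsOcc S P' k) ∧
    (∀ k₀, IsOcc S P k₀ → i < k₀ → (∀ k, IsOcc S P k → i < k → k₀ ≤ k) →
      IsConsec S P i k₀ ∧ k₀ - i < j - i ∧ ¬ IsOcc S P' k₀ ∧ ¬ IsConsec S P' i k₀) := by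
  obtain ⟨hij, hi', hj', hcons'⟩ := h'
  have hi : IsOcc S P i := occ_of_prefix hpre hi'
  have hj : IsOcc S P j := occ_of_prefix hpre hj'
  have hex : ∃ k, i < k ∧ k < j ∧ IsOcc S P k := by
    by_contra hc
    push_neg at hc
    exact hnot ⟨hij, hi, hj, fun k h1 h2 hk => (hc k h1 h2) hk⟩
  obtain ⟨k, hk1, hk2, hk3⟩ := hex
  constructor
  · exact ⟨k, hk1, hk2, hk3, hcons' k hk1 hk2⟩
  · intro k₀ hk₀ hik₀ hmin
    have hk₀k : k₀ ≤ k := hmin k hk3 hk1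
    have hk₀j : k₀ < j := lt_of_le_of_lt hk₀k hk2
    have hnP' : ¬ IsOcc S P' k₀ := hcons' k₀ hik₀ hk₀j
    exact ⟨⟨hik₀, hi, hk₀, fun m h1 h2 hm => absurd (hmin m hm h1) (not_le.2 h2)⟩,
      by omega, hnP', fun hc => hnP' hc.2.2.1⟩
end

section
/- Let S be a string and let P, P' be patterns with P a prefix of P'. Then for every natural number t, the number of consecutive occurrences of P' in S with distance at most t is at most the number of consecutive occurrences of P in S with distance at most t; that is, card{(i, j) ∈ D_S(P') : j − i ≤ t} ≤ card{(i, j) ∈ D_S(P) : j − i ≤ t}. -/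
variable {α : Type*}

lemma isOcc_mono {S P P' : List α} (h : P <+: P') {i : ℕ} (ho : IsOcc S P' i) :
    IsOcc S P i := by
  obtain ⟨Q, rfl⟩ := h
  obtain ⟨h1, h2⟩ := ho
  constructor
  · have : P.length ≤ (P ++ Q).length := by simp
    omega
  · intro u hu
    rw [h2 u (by simp; omega), List.getElem?_append_left hu]

/-- There is a consecutive P-occurrence starting at i, ending at most at j. -/
lemma exists_consec {S P : List α} {i j : ℕ} (hi : IsOcc S P i) (hj : IsOcc S P j)
    (hij : i < j) : ∃ k, k ≤ j ∧ IsConsec S P i k := by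
  set T : Set ℕ := {k | i < k ∧ IsOcc S P k} with hT
  have hne : T.Nonempty := ⟨j, hij, hj⟩
  have hmem := Nat.sInf_mem hne
  refine ⟨sInf T, Nat.sInf_le ⟨hij, hj⟩, hmem.1, hi, hmem.2, ?_⟩
  intro k h1 h2 hk
  exact absurd (Nat.sInf_le (show k ∈ T from ⟨h1, hk⟩)) (by omega)

/-- For every threshold `t`, the number of consecutive occurrences of `P'` of distance at
most `t` is at most the corresponding number for its prefix `P`. -/
theorem stmt_4 (S P P' : List α) (hpre : P <+: P') (t : ℕ) :
    {p ∈ DSet S P' | p.2 - p.1 ≤ t}.ncard ≤ {p ∈ DSet S P | p.2 - p.1 ≤ t}.ncard := by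
  classical
  set A' := {p ∈ DSet S P' | p.2 - p.1 ≤ t} with hA'
  set A := {p ∈ DSet S P | p.2 - p.1 ≤ t} with hA
  have hAfin : A.Finite := by
    apply Set.Finite.subset ((Set.finite_Iic S.length).prod (Set.finite_Iic S.length))
    rintro ⟨i, j⟩ ⟨⟨hlt, hi, hj, _⟩, _⟩
    exact ⟨by have := hi.1; simp; omega, by have := hj.1; simp; omega⟩
  -- the map
  let f : ℕ × ℕ → ℕ × ℕ := fun p => (p.1, sInf {k | p.1 < k ∧ IsOcc S P k})
  have hmaps : ∀ p ∈ A', f p ∈ A := by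
    rintro ⟨i, j⟩ ⟨⟨hlt, hi, hj, _⟩, hdist⟩
    obtain ⟨k, hkj, hcons⟩ := exists_consec (isOcc_mono hpre hi) (isOcc_mono hpre hj) hlt
    have hk : sInf {k | i < k ∧ IsOcc S P k} = k := by
      rcases hcons with ⟨h1, _, h2, h3⟩
      have hle : sInf {k | i < k ∧ IsOcc S P k} ≤ k := Nat.sInf_le ⟨h1, h2⟩
      have hmem := Nat.sInf_mem (⟨k, h1, h2⟩ : Set.Nonempty {k | i < k ∧ IsOcc S P k})
      rcases lt_or_eq_of_le hle with h | h
      · exact absurd hmem.2 (h3 _ hmem.1 h)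
      · exact h
    refine ⟨?_, ?_⟩
    · show IsConsec S P i (sInf _)
      rw [hk]; exact hcons
    · simp only [f, hk]; simp at hdist ⊢; omega
  have hinj : Set.InjOn f A' := by
    rintro ⟨i, j⟩ ⟨⟨hlt, hi, hj, hmin⟩, _⟩ ⟨i', j'⟩ ⟨⟨hlt', hi', hj', hmin'⟩, _⟩ heq
    simp only [f, Prod.mk.injEq] at heq
    obtain ⟨rfl, _⟩ := heq
    have : j = j' := by
      rcases lt_trichotomy j j' with h | h | h
      · exact absurd hj (hmin' j hlt h)
      · exact h
      · exact absurd hj' (hmin j' hlt' h)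
    simp [this]
  calc A'.ncard = (f '' A').ncard := (Set.ncard_image_of_injOn hinj).symm
    _ ≤ A.ncard := Set.ncard_le_ncard (Set.image_subset_iff.mpr hmaps) hAfin
end

section
/- Let S be a string and let P, P' be patterns with P a prefix of P'. Then the number of consecutive occurrences of P in S that are not consecutive occurrences of P' in S is at most twice the number of positions that are occurrences of P but not occurrences of P'; that is, card(D_S(P) \ D_S(P')) ≤ 2 · card(Occ_S(P) \ Occ_S(P')). -/
variable {α : Type*}

lemma consec_succ_unique {S P : List α} {i j j' : ℕ}
    (h : IsConsec S P i j) (h' : IsConsec S P i j') : j = j' := by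
  by_contra hne
  rcases lt_or_gt_of_ne hne with hl | hl
  · exact h'.2.2.2 j h.1 hl h.2.2.1
  · exact h.2.2.2 j' h'.1 hl h'.2.2.1

lemma consec_pred_unique {S P : List α} {i i' j : ℕ}
    (h : IsConsec S P i j) (h' : IsConsec S P i' j) : i = i' := by
  by_contra hne
  rcases lt_or_gt_of_ne hne with hl | hl
  · exact h.2.2.2 i' hl h'.1 h'.2.1
  · exact h'.2.2.2 i hl h.1 h.2.1

/-- The number of consecutive occurrences of `P` that are not consecutive occurrences of an
extension `P'` is at most twice the number of occurrences of `P` that are not occurrences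
of `P'`. -/
theorem stmt_5 (S P P' : List α) (hpre : P <+: P') :
    (DSet S P \ DSet S P').ncard ≤ 2 * (OccSet S P \ OccSet S P').ncard := by
  classical
  have hBA : OccSet S P' ⊆ OccSet S P := by
    obtain ⟨Q, rfl⟩ := hpre
    intro i hi
    obtain ⟨h1, h2⟩ := hi
    have hlen : P.length ≤ (P ++ Q).length := by simp
    refine ⟨by omega, fun t ht => ?_⟩
    rw [h2 t (by omega), List.getElem?_append, if_pos ht]
  set T := OccSet S P \ OccSet S P' with hT
  have hTfin : T.Finite := by
    apply Set.Finite.subset (Set.finite_Iic S.length)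
    intro i hi
    have := hi.1.1
    simp only [Set.mem_Iic]
    omega
  set E := DSet S P \ DSet S P' with hE
  have hsplit : ∀ p ∈ E, p.1 ∈ T ∨ p.2 ∈ T := by
    rintro ⟨i, j⟩ ⟨hD, hnD⟩
    by_contra hc
    push_neg at hc
    obtain ⟨h1, h2⟩ := hc
    have hD' : IsConsec S P i j := hD
    have hi' : i ∈ OccSet S P' := by
      by_contra h; exact h1 ⟨hD'.2.1, h⟩
    have hj' : j ∈ OccSet S P' := by
      by_contra h; exact h2 ⟨hD'.2.2.1, h⟩
    exact hnD ⟨hD'.1, hi', hj', fun k hk1 hk2 hk => hD'.2.2.2 k hk1 hk2 (hBA hk)⟩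
  set E1 := {p ∈ E | p.1 ∈ T} with hE1
  set E2 := {p ∈ E | p.2 ∈ T} with hE2
  have hEsub : E ⊆ E1 ∪ E2 := fun p hp =>
    (hsplit p hp).imp (fun h => ⟨hp, h⟩) (fun h => ⟨hp, h⟩)
  have hinj1 : Set.InjOn Prod.fst E1 := by
    rintro ⟨i, j⟩ ⟨hp, _⟩ ⟨i', j'⟩ ⟨hq, _⟩ h
    simp only at h
    subst h
    have hj : j = j' := consec_succ_unique hp.1 hq.1
    subst hj; rfl
  have hinj2 : Set.InjOn Prod.snd E2 := by
    rintro ⟨i, j⟩ ⟨hp, _⟩ ⟨i', j'⟩ ⟨hq, _⟩ h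
    simp only at h
    subst h
    have hi : i = i' := consec_pred_unique hp.1 hq.1
    subst hi; rfl
  have hmaps1 : ∀ p ∈ E1, p.1 ∈ T := fun p hp => hp.2
  have hmaps2 : ∀ p ∈ E2, p.2 ∈ T := fun p hp => hp.2
  have hE1fin : E1.Finite :=
    Set.Finite.of_finite_image
      (hTfin.subset (by rintro x ⟨p, hp, rfl⟩; exact hp.2)) hinj1
  have hE2fin : E2.Finite :=
    Set.Finite.of_finite_image
      (hTfin.subset (by rintro x ⟨p, hp, rfl⟩; exact hp.2)) hinj2
  calc E.ncard ≤ (E1 ∪ E2).ncard := Set.ncard_le_ncard hEsub (hE1fin.union hE2fin)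
    _ ≤ E1.ncard + E2.ncard := Set.ncard_union_le E1 E2
    _ ≤ T.ncard + T.ncard :=
        add_le_add (Set.ncard_le_ncard_of_injOn _ hmaps1 hinj1 hTfin)
          (Set.ncard_le_ncard_of_injOn _ hmaps2 hinj2 hTfin)
    _ = 2 * T.ncard := by ring
end

section
/- Let S be a string, k a positive integer, and P, Q, R patterns with P a prefix of Q and Q a prefix of R. Suppose the pair (i, j) is a consecutive occurrence of P with card{(a, b) ∈ D_S(P) : b − a < j − i} < k, and also a consecutive occurrence of R with card{(a, b) ∈ D_S(R) : b − a < j − i} < k. Then (i, j) is a consecutive occurrence of Q with card{(a, b) ∈ D_S(Q) : b − a < j − i} < k. (Hence, along a chain of patterns each a prefix of the next, the set of indices at which a fixed pair is among the k closest consecutive occurrences is an interval of consecutive integers.) -/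
/-!
An occurrence of a pattern is an occurrence of each of its prefixes, so when `P <+: Q <+: R` the
occurrences of `R` at `i` and `j` are occurrences of `Q`, and the absence of `P` strictly between
them rules out any `Q` there. For the count, send each short consecutive occurrence `(a, b)` of `Q`
to the first consecutive occurrence of `P` starting at `a`: it lies in `[a, b]`, hence is at least
as short, and two distinct consecutive occurrences of `Q` span intervals overlapping in at most one
point, so this map is injective.
-/

variable {α : Type*}

theorem IsOcc.of_prefix {S P Q : List α} (hPQ : P <+: Q) {i : ℕ} (h : IsOcc S Q i) :
    IsOcc S P i := by
  obtain ⟨T, rfl⟩ := hPQ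
  obtain ⟨hlen, hget⟩ := h
  refine ⟨by simp only [List.length_append] at hlen; omega, fun t ht => ?_⟩
  have := hget t (by simp only [List.length_append]; omega)
  rwa [List.getElem?_append_left ht] at this

theorem IsOcc.le_length {S P : List α} {i : ℕ} (h : IsOcc S P i) : i ≤ S.length :=
  le_of_add_le_left h.1

theorem IsConsec.of_prefix_of_prefix {S P Q R : List α} (hPQ : P <+: Q) (hQR : Q <+: R)
    {i j : ℕ} (hP : IsConsec S P i j) (hR : IsConsec S R i j) : IsConsec S Q i j :=
  ⟨hP.1, hR.2.1.of_prefix hQR, hR.2.2.1.of_prefix hQR,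
    fun m him hmj hm => hP.2.2.2 m him hmj (hm.of_prefix hPQ)⟩

theorem IsOcc.exists_isConsec {S P : List α} {a b : ℕ} (hab : a < b) (ha : IsOcc S P a)
    (hb : IsOcc S P b) : ∃ c, IsConsec S P a c ∧ c ≤ b := by
  classical
  have hex : ∃ m, a < m ∧ IsOcc S P m := ⟨b, hab, hb⟩
  obtain ⟨hac, hc⟩ := Nat.find_spec hex
  exact ⟨Nat.find hex, ⟨hac, ha, hc, fun m ham hmc hm => Nat.find_min hex hmc ⟨ham, hm⟩⟩,
    Nat.find_min' hex ⟨hab, hb⟩⟩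

theorem IsConsec.eq_of_lt_of_lt {S P : List α} {a b c d : ℕ} (h₁ : IsConsec S P a b)
    (h₂ : IsConsec S P c d) (hcb : c < b) (had : a < d) : a = c ∧ b = d := by
  obtain ⟨hab, ha, hb, hno₁⟩ := h₁
  obtain ⟨hcd, hc, hd, hno₂⟩ := h₂
  have hac : a = c := by
    rcases lt_trichotomy a c with h | h | h
    · exact absurd hc (hno₁ c h hcb)
    · exact h
    · exact absurd ha (hno₂ a h had)
  subst hac
  refine ⟨rfl, ?_⟩
  rcases lt_trichotomy b d with h | h | h
  · exact absurd hb (hno₂ b hab h)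
  · exact h
  · exact absurd hd (hno₁ d hcd h)

theorem dSet_finite (S P : List α) : (DSet S P).Finite := by
  refine ((Set.finite_Iic S.length).prod (Set.finite_Iic S.length)).subset ?_
  rintro ⟨a, b⟩ ⟨-, ha, hb, -⟩
  exact ⟨ha.le_length, hb.le_length⟩

theorem ncard_dSet_dist_lt_le_of_prefix (S : List α) {P Q : List α} (hPQ : P <+: Q) (L : ℕ) :
    {p ∈ DSet S Q | p.2 - p.1 < L}.ncard ≤ {p ∈ DSet S P | p.2 - p.1 < L}.ncard := by
  have hex : ∀ p ∈ {p ∈ DSet S Q | p.2 - p.1 < L}, ∃ c, IsConsec S P p.1 c ∧ c ≤ p.2 :=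
    fun p hp => (hp.1.2.1.of_prefix hPQ).exists_isConsec hp.1.1
      (hp.1.2.2.1.of_prefix hPQ)
  choose! f hf hfle using hex
  refine Set.ncard_le_ncard_of_injOn (fun p => (p.1, f p)) (fun p hp => ⟨hf p hp, ?_⟩) ?_
    ((dSet_finite S P).subset fun _ hp => hp.1)
  · have := hp.2
    have := (hf p hp).1
    have := hfle p hp
    dsimp only
    omega
  · rintro ⟨a, b⟩ hp ⟨c, d⟩ hq heq
    obtain ⟨rfl, hfeq⟩ := Prod.mk.inj heq
    have hlt := (hf (a, b) hp).1
    have hle₁ := hfle (a, b) hp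
    have hle₂ := hfle (a, d) hq
    dsimp only at hfeq hlt hle₁ hle₂
    obtain ⟨-, rfl⟩ := hp.1.eq_of_lt_of_lt hq.1 (by omega) (by omega)
    rfl

theorem stmt_8_general (S P Q R : List α) (hPQ : P <+: Q) (hQR : Q <+: R)
    (k : ℕ) (i j : ℕ)
    (hP : IsConsec S P i j)
    (hPtop : {p ∈ DSet S P | p.2 - p.1 < j - i}.ncard < k)
    (hR : IsConsec S R i j) :
    IsConsec S Q i j ∧ {p ∈ DSet S Q | p.2 - p.1 < j - i}.ncard < k :=
  ⟨hP.of_prefix_of_prefix hPQ hQR hR,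
    (ncard_dSet_dist_lt_le_of_prefix S hPQ (j - i)).trans_lt hPtop⟩

/-- If `P` is a prefix of `Q` and `Q` of `R`, and the pair `(i,j)` is among the `k` closest
consecutive occurrences of both `P` and `R`, then it is a consecutive occurrence of `Q`
which is also among the `k` closest. -/
theorem stmt_8 (S P Q R : List α) (hPQ : P <+: Q) (hQR : Q <+: R)
    (k : ℕ) (hk : 0 < k) (i j : ℕ)
    (hP : IsConsec S P i j)
    (hPtop : {p ∈ DSet S P | p.2 - p.1 < j - i}.ncard < k)
    (hR : IsConsec S R i j)
    (hRtop : {p ∈ DSet S R | p.2 - p.1 < j - i}.ncard < k) :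
    IsConsec S Q i j ∧ {p ∈ DSet S Q | p.2 - p.1 < j - i}.ncard < k :=
  stmt_8_general S P Q R hPQ hQR k i j hP hPtop hR
end

section
/- Let S be a string and let P_0, P_1, …, P_ℓ be patterns such that P_{d−1} is a prefix of P_d for every 1 ≤ d ≤ ℓ. Then the union of the sets of consecutive occurrences along the chain satisfies card(⋃_{d=0}^{ℓ} D_S(P_d)) ≤ 2 · card(Occ_S(P_0)). -/
variable {α : Type*}

lemma occ_anti {S Q R : List α} (h : Q <+: R) : OccSet S R ⊆ OccSet S Q := by
  rintro i ⟨hlen, hmatch⟩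
  obtain ⟨u, rfl⟩ := h
  refine ⟨le_trans (by simp) hlen, fun t ht => ?_⟩
  rw [hmatch t (by simp; omega), List.getElem?_append_left ht]

lemma occ_finite (S Q : List α) : (OccSet S Q).Finite := by
  apply Set.Finite.subset (Set.finite_Iic S.length)
  rintro i ⟨hlen, -⟩
  simp only [Set.mem_Iic]; omega

lemma consec_unique {S Q : List α} {i j i' j' k : ℕ}
    (hp : IsConsec S Q i j) (hq : IsConsec S Q i' j')
    (h1 : i < k) (h2 : k < j) (h1' : i' < k) (h2' : k < j') : i = i' ∧ j = j' := by
  have hii : i = i' := by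
    rcases lt_trichotomy i i' with h | h | h
    · exact absurd hq.2.1 (hp.2.2.2 i' h (lt_trans h1' h2))
    · exact h
    · exact absurd hp.2.1 (hq.2.2.2 i h (lt_trans h1 h2'))
  refine ⟨hii, ?_⟩
  rcases lt_trichotomy j j' with h | h | h
  · exact absurd hp.2.2.1 (hq.2.2.2 j (hii ▸ lt_trans h1 h2) h)
  · exact h
  · exact absurd hq.2.2.1 (hp.2.2.2 j' (hii ▸ lt_trans h1' h2') h)

/-- Along a chain of patterns `P 0, P 1, …, P ℓ`, each a prefix of the next, the union of the
sets of consecutive occurrences has size at most twice the number of occurrences of `P 0`. -/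
theorem stmt_9 (S : List α) (ℓ : ℕ) (P : ℕ → List α)
    (hchain : ∀ d, 1 ≤ d → d ≤ ℓ → P (d - 1) <+: P d) :
    (⋃ d ∈ Set.Iic ℓ, DSet S (P d)).ncard ≤ 2 * (OccSet S (P 0)).ncard := by
  classical
  set U := ⋃ d ∈ Set.Iic ℓ, DSet S (P d) with hU
  have hOccFin := occ_finite S (P 0)
  -- monotone shrinking of occurrence sets
  have hmono : ∀ a b, a ≤ b → b ≤ ℓ → OccSet S (P b) ⊆ OccSet S (P a) := by
    intro a b hab hb
    induction b with
    | zero => simp only [Nat.le_zero] at hab; subst hab; exact subset_rfl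
    | succ n ih =>
      rcases Nat.lt_or_ge a (n + 1) with h | h
      · exact (occ_anti (by simpa using hchain (n + 1) (by omega) hb)).trans
          (ih (by omega) (by omega))
      · have : a = n + 1 := by omega
        subst this; exact subset_rfl
  -- membership in U
  have hUmem : ∀ p ∈ U, ∃ d, d ≤ ℓ ∧ p ∈ DSet S (P d) := by
    intro p hp
    simp only [hU, Set.mem_iUnion, Set.mem_Iic, exists_prop] at hp
    exact hp
  -- U is finite
  have hUfin : U.Finite := by
    apply Set.Finite.subset ((Set.finite_Iic S.length).prod (Set.finite_Iic S.length))
    rintro ⟨i, j⟩ hp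
    obtain ⟨d, -, hcons⟩ := hUmem _ hp
    obtain ⟨-, ⟨h1, -⟩, ⟨h2, -⟩, -⟩ := hcons
    exact ⟨by simp only [Set.mem_Iic]; omega, by simp only [Set.mem_Iic]; omega⟩
  set A := U ∩ DSet S (P 0) with hA
  set B := U \ DSet S (P 0) with hB
  have hsplit : U = A ∪ B := (Set.inter_union_diff U _).symm
  -- A injects into occurrences via left endpoint
  have hAcard : A.ncard ≤ (OccSet S (P 0)).ncard := by
    refine Set.ncard_le_ncard_of_injOn Prod.fst ?_ ?_ hOccFin
    · rintro p ⟨-, hp0⟩; exact hp0.2.1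
    · rintro p ⟨-, hp0⟩ q ⟨-, hq0⟩ hfst
      have : p.2 = q.2 := by
        rcases lt_trichotomy p.2 q.2 with h | h | h
        · exact absurd hp0.2.2.1 (hq0.2.2.2 p.2 (hfst ▸ hp0.1) h)
        · exact h
        · exact absurd hq0.2.2.1 (hp0.2.2.2 q.2 (hfst ▸ hq0.1) h)
      exact Prod.ext hfst this
  -- existence of a "dying" occurrence inside each pair of B
  have hE : ∀ p ∈ B, ∃ d, 0 < d ∧ d ≤ ℓ ∧ p ∈ DSet S (P d) ∧
      ∃ k, p.1 < k ∧ k < p.2 ∧ IsOcc S (P (d - 1)) k ∧ ¬ IsOcc S (P d) k := by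
    rintro p ⟨hpU, hp0⟩
    have hex : ∃ d, d ≤ ℓ ∧ p ∈ DSet S (P d) := hUmem _ hpU
    set d := Nat.find hex with hd
    obtain ⟨hdl, hcons⟩ := Nat.find_spec hex
    have hdpos : 0 < d := by
      rcases Nat.eq_zero_or_pos d with h | h
      · exact absurd (h ▸ hcons) hp0
      · exact h
    have hnot : p ∉ DSet S (P (d - 1)) := by
      intro hcon
      exact Nat.find_min hex (m := d - 1) (by omega) ⟨by omega, hcon⟩
    have hocc1 : IsOcc S (P (d - 1)) p.1 := hmono (d - 1) d (by omega) hdl hcons.2.1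
    have hocc2 : IsOcc S (P (d - 1)) p.2 := hmono (d - 1) d (by omega) hdl hcons.2.2.1
    have hlt : p.1 < p.2 := hcons.1
    simp only [DSet, Set.mem_setOf_eq, IsConsec] at hnot
    push_neg at hnot
    obtain ⟨k, hk1, hk2, hkocc⟩ := hnot hlt hocc1 hocc2
    exact ⟨d, hdpos, hdl, hcons, k, hk1, hk2, hkocc, hcons.2.2.2 k hk1 hk2⟩
  -- the charging function for B
  set f : ℕ × ℕ → ℕ := fun p =>
    if h : ∃ d, 0 < d ∧ d ≤ ℓ ∧ p ∈ DSet S (P d) ∧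
        ∃ k, p.1 < k ∧ k < p.2 ∧ IsOcc S (P (d - 1)) k ∧ ¬ IsOcc S (P d) k
    then h.choose_spec.2.2.2.choose else 0 with hf
  have hfspec : ∀ p ∈ B, ∃ d, 0 < d ∧ d ≤ ℓ ∧ p ∈ DSet S (P d) ∧
      p.1 < f p ∧ f p < p.2 ∧ IsOcc S (P (d - 1)) (f p) ∧ ¬ IsOcc S (P d) (f p) := by
    intro p hp
    have h := hE p hp
    simp only [hf, dif_pos h]
    exact ⟨h.choose, h.choose_spec.1, h.choose_spec.2.1, h.choose_spec.2.2.1,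
      h.choose_spec.2.2.2.choose_spec⟩
  have hBcard : B.ncard ≤ (OccSet S (P 0)).ncard := by
    refine Set.ncard_le_ncard_of_injOn f ?_ ?_ hOccFin
    · intro p hp
      obtain ⟨d, hdpos, hdl, -, -, -, hkocc, -⟩ := hfspec p hp
      exact hmono 0 (d - 1) (Nat.zero_le _) (by omega) hkocc
    · intro p hp q hq hfeq
      obtain ⟨d, hdpos, hdl, hpcons, hp1, hp2, hpk, hpnk⟩ := hfspec p hp
      obtain ⟨e, hepos, hel, hqcons, hq1, hq2, hqk, hqnk⟩ := hfspec q hq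
      have hde : d = e := by
        rcases lt_trichotomy d e with h | h | h
        · exact absurd (hmono d (e - 1) (by omega) (by omega) (hfeq ▸ hqk)) hpnk
        · exact h
        · exact absurd (hmono e (d - 1) (by omega) (by omega) hpk) (hfeq ▸ hqnk)
      subst hde
      obtain ⟨h1, h2⟩ := consec_unique hpcons hqcons hp1 hp2 (hfeq ▸ hq1) (hfeq ▸ hq2)
      exact Prod.ext h1 h2
  calc U.ncard = (A ∪ B).ncard := by rw [← hsplit]
    _ ≤ A.ncard + B.ncard :=
        Set.ncard_union_le A B
    _ ≤ (OccSet S (P 0)).ncard + (OccSet S (P 0)).ncard := add_le_add hAcard hBcard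
    _ = 2 * (OccSet S (P 0)).ncard := (two_mul _).symm
end

section
/- There exists an absolute constant C > 0 such that for every alphabet Σ and every string S over Σ of length n ≥ 2, the number of pairs (i, j) that are a consecutive occurrence of at least one nonempty pattern in S is at most C · n · log n; that is, card{(i, j) : ∃ nonempty pattern P, (i, j) ∈ D_S(P)} ≤ C · n · log n. -/
variable {α : Type*}

/-!
Group the starting positions of the length-`ℓ` windows of `S` by their content. A consecutive
occurrence of a pattern of length `ℓ` is a pair of neighbours inside one class, so the pairs to be
counted are those of level `1` (at most `n`) plus those that first appear at some level `ℓ + 1`.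
Going from `ℓ` to `ℓ + 1` splits a class `K'` into subclasses; a new neighbour pair inside a
subclass `K` straddles a position of `K' \ K`, and distinct new pairs straddle distinct such
positions, so `K` gains at most `min (|K'| - |K|) |K| ≤ 2 |K| log₂ (|K'| / |K|)` new pairs.
Summing, the new pairs of a level are at most twice the drop of the potential
`∑_K |K| log₂ |K|`, which starts below `n log₂ n` and stays nonnegative; in total there are at
most `n + 2 n log₂ n ≤ 3 n log₂ n` pairs.
-/

open Finset Real

lemma le_two_mul_mul_logb_sub {m c d : ℝ} (hd : 0 < d) (hdc : d ≤ c) (hm₁ : m ≤ c - d)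
    (hm₂ : m ≤ d) : m ≤ 2 * d * (logb 2 c - logb 2 d) := by
  have hc : 0 < c := hd.trans_le hdc
  rw [← logb_div hc.ne' hd.ne']
  rcases le_or_gt (2 * d) c with hbig | hsmall
  · have : 1 ≤ logb 2 (c / d) := by
      rw [le_logb_iff_rpow_le one_lt_two (by positivity), rpow_one, le_div_iff₀ hd]
      exact hbig
    nlinarith
  · have hlog_nonneg : 0 ≤ log (c / d) := log_nonneg ((one_le_div hd).2 hdc)
    have hlog_le_logb : log (c / d) ≤ logb 2 (c / d) := by
      rw [logb, le_div_iff₀ (log_pos one_lt_two)]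
      nlinarith [log_two_lt_d9]
    have hlog : 1 - d / c ≤ log (c / d) := by
      simpa only [inv_div] using one_sub_inv_le_log_of_pos (div_pos hc hd)
    have : c - d ≤ 2 * d * (1 - d / c) := by
      rw [one_sub_div hc.ne', ← mul_div_assoc, le_div_iff₀ hc]
      nlinarith
    nlinarith

section KeyClasses

variable {ι κ : Type*} [DecidableEq κ]

def keyClass (s : Finset ι) (f : ι → κ) (x : ι) : Finset ι := {y ∈ s | f y = f x}

/-- Equal to `∑ K, #K * logb 2 #K` over the classes `K` of `s` under `f`. -/
noncomputable def classPotential (s : Finset ι) (f : ι → κ) : ℝ :=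
  ∑ x ∈ s, logb 2 #(keyClass s f x)

variable {s s' : Finset ι} {f f' : ι → κ}

lemma mem_keyClass {x y : ι} : y ∈ keyClass s f x ↔ y ∈ s ∧ f y = f x := mem_filter

lemma keyClass_nonempty {x : ι} (hx : x ∈ s) : (keyClass s f x).Nonempty :=
  ⟨x, mem_keyClass.2 ⟨hx, rfl⟩⟩

lemma keyClass_eq_of_eq {x y : ι} (h : f y = f x) : keyClass s f y = keyClass s f x := by
  simp only [keyClass, h]

lemma keyClass_subset_of_refines (hss : s' ⊆ s)
    (hf : ∀ x ∈ s', ∀ y ∈ s', f' x = f' y → f x = f y)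
    {x : ι} (hx : x ∈ s') : keyClass s' f' x ⊆ keyClass s f x := fun y hy ↦
  have hy := mem_keyClass.1 hy
  mem_keyClass.2 ⟨hss hy.1, hf y hy.1 x hx hy.2⟩

lemma logb_card_keyClass_nonneg {x : ι} (hx : x ∈ s) : 0 ≤ logb 2 #(keyClass s f x) :=
  logb_nonneg one_lt_two (by exact_mod_cast (keyClass_nonempty hx).card_pos)

lemma classPotential_nonneg (s : Finset ι) (f : ι → κ) : 0 ≤ classPotential s f :=
  sum_nonneg fun _ ↦ logb_card_keyClass_nonneg

lemma classPotential_le_card_mul_logb (s : Finset ι) (f : ι → κ) :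
    classPotential s f ≤ #s * logb 2 #s := by
  rw [← nsmul_eq_mul, ← sum_const]
  exact sum_le_sum fun x hx ↦ logb_le_logb_of_le one_lt_two
    (by exact_mod_cast (keyClass_nonempty hx).card_pos) (by exact_mod_cast card_filter_le _ _)

end KeyClasses

section ConsecPairs

variable {ι κ : Type*} [LinearOrder ι] [DecidableEq κ]

def consecPairs (s : Finset ι) (f : ι → κ) : Finset (ι × ι) :=
  {p ∈ s ×ˢ s |
    p.1 < p.2 ∧ f p.1 = f p.2 ∧ ∀ z ∈ s, p.1 < z → z < p.2 → f z ≠ f p.1}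

variable {s s' : Finset ι} {f f' : ι → κ} {p q : ι × ι}

lemma mem_consecPairs : p ∈ consecPairs s f ↔ p.1 ∈ s ∧ p.2 ∈ s ∧ p.1 < p.2 ∧
    f p.1 = f p.2 ∧ ∀ z ∈ s, p.1 < z → z < p.2 → f z ≠ f p.1 := by
  simp [consecPairs, and_assoc]

lemma consecPairs_eq_of_fst_le_of_lt_snd (hp : p ∈ consecPairs s f) (hq : q ∈ consecPairs s f)
    (hpq : f p.1 = f q.1) (h₁ : p.1 ≤ q.1) (h₂ : q.1 < p.2) : p = q := by
  obtain ⟨-, hp₂, hp, hpf, hpmin⟩ := mem_consecPairs.1 hp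
  obtain ⟨hq₁, hq₂, hq, hqf, hqmin⟩ := mem_consecPairs.1 hq
  obtain h₁ | h₁ := h₁.lt_or_eq
  · exact absurd hpq.symm (hpmin q.1 hq₁ h₁ h₂)
  · refine Prod.ext h₁ (le_antisymm ?_ ?_) <;> by_contra! h
    · exact hpmin q.2 hq₂ (h₁ ▸ hq) h (hqf.symm.trans hpq.symm)
    · exact hqmin p.2 hp₂ (h₁ ▸ hp) h (hpf.symm.trans hpq)

lemma consecPairs_eq_of_lt_of_lt (hp : p ∈ consecPairs s f) (hq : q ∈ consecPairs s f)
    (hpq : f p.1 = f q.1) {z : ι} (hpz : p.1 < z) (hzp : z < p.2) (hqz : q.1 < z)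
    (hzq : z < q.2) : p = q := by
  rcases le_total p.1 q.1 with h | h
  · exact consecPairs_eq_of_fst_le_of_lt_snd hp hq hpq h (hqz.trans hzp)
  · exact (consecPairs_eq_of_fst_le_of_lt_snd hq hp hpq.symm h (hpz.trans hzq)).symm

lemma consecPairs_injOn_fst : Set.InjOn Prod.fst (consecPairs s f : Set (ι × ι)) := by
  intro p hp q hq h
  exact consecPairs_eq_of_fst_le_of_lt_snd hp hq (congrArg f h) h.le
    (h ▸ (mem_consecPairs.1 hp).2.2.1)

lemma card_consecPairs_le : #(consecPairs s f) ≤ #s :=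
  card_le_card_of_injOn Prod.fst (fun _ hp ↦ (mem_consecPairs.1 hp).1) consecPairs_injOn_fst

lemma exists_mem_sdiff_keyClass_of_mem_sdiff_consecPairs (hss : s' ⊆ s)
    (hf : ∀ x ∈ s', ∀ y ∈ s', f' x = f' y → f x = f y)
    (hp : p ∈ consecPairs s' f' \ consecPairs s f) :
    ∃ z ∈ keyClass s f p.1 \ keyClass s' f' p.1, p.1 < z ∧ z < p.2 := by
  obtain ⟨hp', hpn⟩ := mem_sdiff.1 hp
  obtain ⟨hp₁, hp₂, hlt, hpf, hpmin⟩ := mem_consecPairs.1 hp'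
  have hnot := mt mem_consecPairs.2 hpn
  push Not at hnot
  obtain ⟨z, hz, hpz, hzp, hfz⟩ := hnot (hss hp₁) (hss hp₂) hlt (hf _ hp₁ _ hp₂ hpf)
  refine ⟨z, mem_sdiff.2 ⟨mem_keyClass.2 ⟨hz, hfz⟩, fun hz' ↦ ?_⟩, hpz, hzp⟩
  obtain ⟨hz', hfz'⟩ := mem_keyClass.1 hz'
  exact hpmin z hz' hpz hzp hfz'

variable (s f) in
lemma card_consecPairs_filter_le (x : ι) :
    #{p ∈ consecPairs s f | f p.1 = f x} ≤ #(keyClass s f x) :=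
  card_le_card_of_injOn Prod.fst
    (fun _ hp ↦ have hp := mem_filter.1 hp; mem_keyClass.2 ⟨(mem_consecPairs.1 hp.1).1, hp.2⟩)
    (consecPairs_injOn_fst.mono fun _ hp ↦ (mem_filter.1 hp).1)

/-- Each new pair `p` contains a position `z`, strictly between its endpoints, that has left the
class of `p.1` in the refinement; such intervals are disjoint, so `z` determines `p`. -/
lemma card_sdiff_consecPairs_filter_le (hss : s' ⊆ s)
    (hf : ∀ x ∈ s', ∀ y ∈ s', f' x = f' y → f x = f y) {x : ι} (hx : x ∈ s') :
    #{p ∈ consecPairs s' f' \ consecPairs s f | f' p.1 = f' x}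
      ≤ #(keyClass s f x) - #(keyClass s' f' x) := by
  rw [← card_sdiff_of_subset (keyClass_subset_of_refines hss hf hx)]
  refine card_le_card_of_forall_subsingleton (fun p z ↦ p.1 < z ∧ z < p.2) ?_ ?_
  · intro p hp
    obtain ⟨hp, hpx⟩ := mem_filter.1 hp
    have hp₁ : p.1 ∈ s' := (mem_consecPairs.1 (mem_sdiff.1 hp).1).1
    rw [← keyClass_eq_of_eq (hf _ hp₁ _ hx hpx), ← keyClass_eq_of_eq hpx]
    exact exists_mem_sdiff_keyClass_of_mem_sdiff_consecPairs hss hf hp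
  · rintro z - p ⟨hp, hpz, hzp⟩ q ⟨hq, hqz, hzq⟩
    obtain ⟨hp, hpx⟩ := mem_filter.1 hp
    obtain ⟨hq, hqx⟩ := mem_filter.1 hq
    exact consecPairs_eq_of_lt_of_lt (mem_sdiff.1 hp).1 (mem_sdiff.1 hq).1 (hpx.trans hqx.symm)
      hpz hzp hqz hzq

lemma card_sdiff_consecPairs_filter_le_sum (hss : s' ⊆ s)
    (hf : ∀ x ∈ s', ∀ y ∈ s', f' x = f' y → f x = f y) {x : ι} (hx : x ∈ s') :
    (#{p ∈ consecPairs s' f' \ consecPairs s f | f' p.1 = f' x} : ℝ)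
      ≤ 2 * ∑ y ∈ keyClass s' f' x,
          (logb 2 #(keyClass s f y) - logb 2 #(keyClass s' f' y)) := by
  have hconst : ∀ y ∈ keyClass s' f' x,
      logb 2 #(keyClass s f y) - logb 2 #(keyClass s' f' y)
        = logb 2 #(keyClass s f x) - logb 2 #(keyClass s' f' x) := by
    intro y hy
    obtain ⟨hy, hyx⟩ := mem_keyClass.1 hy
    rw [keyClass_eq_of_eq (hf _ hy _ hx hyx), keyClass_eq_of_eq hyx]
  have hsub := keyClass_subset_of_refines hss hf hx
  rw [sum_congr rfl hconst, sum_const, nsmul_eq_mul, ← mul_assoc]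
  refine le_two_mul_mul_logb_sub (by exact_mod_cast (keyClass_nonempty hx).card_pos)
    (by exact_mod_cast card_le_card hsub) ?_ ?_
  · rw [← Nat.cast_sub (card_le_card hsub)]
    exact_mod_cast card_sdiff_consecPairs_filter_le hss hf hx
  · exact_mod_cast (card_le_card (filter_subset_filter _ sdiff_subset)).trans
      (card_consecPairs_filter_le s' f' x)

theorem card_sdiff_consecPairs_le (hss : s' ⊆ s)
    (hf : ∀ x ∈ s', ∀ y ∈ s', f' x = f' y → f x = f y) :
    (#(consecPairs s' f' \ consecPairs s f) : ℝ)
      ≤ 2 * (classPotential s f - classPotential s' f') := by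
  have hmaps : ∀ y ∈ s', f' y ∈ s'.image f' := fun y hy ↦ mem_image_of_mem f' hy
  rw [card_eq_sum_card_fiberwise (f := fun p ↦ f' p.1) (t := s'.image f')
    fun p hp ↦ hmaps _ (mem_consecPairs.1 (mem_sdiff.1 hp).1).1]
  push_cast
  calc _ ≤ ∑ b ∈ s'.image f', 2 * ∑ y ∈ s' with f' y = b,
        (logb 2 #(keyClass s f y) - logb 2 #(keyClass s' f' y)) := by
        refine sum_le_sum fun b hb ↦ ?_
        obtain ⟨x, hx, rfl⟩ := mem_image.1 hb
        exact card_sdiff_consecPairs_filter_le_sum hss hf hx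
    _ = 2 * ∑ y ∈ s', (logb 2 #(keyClass s f y) - logb 2 #(keyClass s' f' y)) := by
        rw [← mul_sum, sum_fiberwise_of_maps_to hmaps]
    _ ≤ 2 * (classPotential s f - classPotential s' f') := by
        unfold classPotential
        rw [sum_sub_distrib]
        gcongr
        exact fun x hx _ ↦ logb_card_keyClass_nonneg hx

end ConsecPairs

lemma card_biUnion_range_le_of_card_sdiff_le {γ : Type*} [DecidableEq γ] (A : ℕ → Finset γ)
    (Φ : ℕ → ℝ) (h : ∀ i, (#(A (i + 1) \ A i) : ℝ) ≤ Φ i - Φ (i + 1)) (m : ℕ) :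
    (#((range (m + 1)).biUnion A) : ℝ) ≤ #(A 0) + (Φ 0 - Φ m) := by
  induction m with
  | zero => simp
  | succ m ih =>
    have hsdiff : (#(A (m + 1) \ (range (m + 1)).biUnion A) : ℝ) ≤ #(A (m + 1) \ A m) := by
      exact_mod_cast card_le_card
        (sdiff_subset_sdiff subset_rfl (subset_biUnion_of_mem A (self_mem_range_succ m)))
    rw [range_add_one, biUnion_insert, ← card_sdiff_add_card]
    push_cast
    linarith [h m]

section Strings

variable {σ : Type*}

def window (S : List σ) (i ℓ : ℕ) : List σ := (S.drop i).take ℓ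

def windowStarts (S : List σ) (ℓ : ℕ) : Finset ℕ := range (S.length + 1 - ℓ)

variable {S : List σ}

lemma mem_windowStarts {i ℓ : ℕ} : i ∈ windowStarts S ℓ ↔ i + ℓ ≤ S.length := by
  rw [windowStarts, mem_range]
  omega

lemma windowStarts_succ_subset (ℓ : ℕ) : windowStarts S (ℓ + 1) ⊆ windowStarts S ℓ :=
  range_subset_range.2 (by omega)

lemma window_eq_of_window_succ_eq {i j ℓ : ℕ}
    (h : window S i (ℓ + 1) = window S j (ℓ + 1)) : window S i ℓ = window S j ℓ := by
  simpa [window, List.take_take] using congrArg (List.take ℓ) h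

lemma isOcc_iff_window {P : List σ} {i : ℕ} :
    IsOcc S P i ↔ i + P.length ≤ S.length ∧ window S i P.length = P := by
  refine and_congr_right fun _ ↦ ⟨fun h ↦ List.ext_getElem? fun t ↦ ?_, fun h t ht ↦ ?_⟩
  · by_cases ht : t < P.length
    · rw [window, List.getElem?_take_of_lt ht, List.getElem?_drop, h t ht]
    · rw [List.getElem?_eq_none (not_lt.1 ht), List.getElem?_eq_none]
      simp only [window, List.length_take]
      exact min_le_of_left_le (not_lt.1 ht)
  · rw [← h, window, List.getElem?_take_of_lt ht, List.getElem?_drop]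

variable [DecidableEq σ]

def levelPairs (S : List σ) (ℓ : ℕ) : Finset (ℕ × ℕ) :=
  consecPairs (windowStarts S ℓ) (window S · ℓ)

lemma mem_levelPairs_of_isConsec {P : List σ} {i j : ℕ} (h : IsConsec S P i j) :
    (i, j) ∈ levelPairs S P.length := by
  obtain ⟨hij, hi, hj, hmin⟩ := h
  rw [isOcc_iff_window] at hi hj
  refine mem_consecPairs.2 ⟨mem_windowStarts.2 hi.1, mem_windowStarts.2 hj.1, hij,
    hi.2.trans hj.2.symm, fun k hk hik hkj hkw ↦ hmin k hik hkj ?_⟩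
  exact isOcc_iff_window.2 ⟨mem_windowStarts.1 hk, hkw.trans hi.2⟩

lemma mem_biUnion_levelPairs_of_isConsec {P : List σ} {i j : ℕ} (hP : P ≠ [])
    (h : IsConsec S P i j) :
    (i, j) ∈ (range (S.length + 1)).biUnion fun ℓ ↦ levelPairs S (ℓ + 1) := by
  obtain ⟨a, P, rfl⟩ := List.exists_cons_of_ne_nil hP
  have hmem := mem_levelPairs_of_isConsec h
  have hle := h.2.2.1.1
  rw [List.length_cons] at hmem hle
  exact mem_biUnion.2 ⟨P.length, mem_range.2 (by omega), hmem⟩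

lemma card_sdiff_levelPairs_le (ℓ : ℕ) :
    (#(levelPairs S (ℓ + 1) \ levelPairs S ℓ) : ℝ)
      ≤ 2 * (classPotential (windowStarts S ℓ) (window S · ℓ)
        - classPotential (windowStarts S (ℓ + 1)) (window S · (ℓ + 1))) :=
  card_sdiff_consecPairs_le (windowStarts_succ_subset ℓ)
    fun _ _ _ _ ↦ window_eq_of_window_succ_eq

lemma card_biUnion_levelPairs_le :
    (#((range (S.length + 1)).biUnion fun i ↦ levelPairs S (i + 1)) : ℝ)
      ≤ S.length + 2 * (S.length * logb 2 S.length) := by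
  have hstarts : #(windowStarts S 1) = S.length := by simp [windowStarts]
  have hpairs : (#(levelPairs S 1) : ℝ) ≤ S.length := by
    exact_mod_cast hstarts ▸ card_consecPairs_le
  have hpot := classPotential_le_card_mul_logb (windowStarts S 1) (window S · 1)
  have hpot_nonneg :=
    classPotential_nonneg (windowStarts S (S.length + 1)) (window S · (S.length + 1))
  rw [hstarts] at hpot
  have := card_biUnion_range_le_of_card_sdiff_le (fun i ↦ levelPairs S (i + 1))
    (fun i ↦ 2 * classPotential (windowStarts S (i + 1)) (window S · (i + 1)))
    (fun i ↦ (card_sdiff_levelPairs_le (i + 1)).trans_eq (mul_sub _ _ _)) S.length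
  linarith

end Strings

universe u

/-- There is an absolute constant `C > 0` such that for every string `S` of length `n ≥ 2`
over any alphabet, the number of pairs that form a consecutive occurrence of at least one
nonempty pattern is at most `C · n · log₂ n`. -/
theorem stmt_10 : ∃ C : ℝ, 0 < C ∧
    ∀ (σ : Type u) (S : List σ), 2 ≤ S.length →
      ({p : ℕ × ℕ | ∃ P : List σ, P ≠ [] ∧ IsConsec S P p.1 p.2}.ncard : ℝ)
        ≤ C * S.length * Real.logb 2 S.length := by
  refine ⟨3, three_pos, fun σ S hn ↦ ?_⟩
  classical
  set T : Finset (ℕ × ℕ) := (range (S.length + 1)).biUnion fun ℓ ↦ levelPairs S (ℓ + 1)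
  have hsub : {p : ℕ × ℕ | ∃ P : List σ, P ≠ [] ∧ IsConsec S P p.1 p.2} ⊆ T :=
    fun _ ⟨_, hP, hconsec⟩ ↦ mem_biUnion_levelPairs_of_isConsec hP hconsec
  have hlog : 1 ≤ logb 2 S.length := by
    rw [le_logb_iff_rpow_le one_lt_two (by positivity), rpow_one]
    exact_mod_cast hn
  calc _ ≤ (#T : ℝ) := by
        exact_mod_cast (Set.ncard_le_ncard hsub T.finite_toSet).trans_eq (Set.ncard_coe_finset T)
    _ ≤ S.length + 2 * (S.length * logb 2 S.length) := card_biUnion_levelPairs_le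
    _ ≤ 3 * S.length * logb 2 S.length := by nlinarith
end
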